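/- arXiv:2001.06343 — 7 statements merged into one kernel-verified Lean document; each statement's English description precedes it below -/
import Mathlib

section
/- Let a, b, c be affinely independent points in the Euclidean plane and let m_ab, m_bc, m_ac denote the midpoints of the segments ab, bc, ac respectively. Then the union of the convex hulls of {a, m_ab, m_ac}, {m_ab, b, m_bc}, {m_ac, m_bc, c}, and {m_ab, m_bc, m_ac} equals the convex hull of {a, b, c}. (Covering property of the red refinement: the four subtriangles obtained by joining the midpoints of the edges of a triangle cover the triangle.) -/
/-! Write a point of the triangle in barycentric coordinates `α a + β b + γ c`. If some
coordinate, say `α`, is at least `1/2`, the point lies in the corner triangle at `a`, with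
coordinates `(2α - 1, 2β, 2γ)` there. Otherwise all three coordinates are below `1/2` and the
point lies in the middle triangle, with coordinates `1 - 2γ`, `1 - 2α`, `1 - 2β` with respect to
the midpoints of the edges opposite `c`, `a`, `b`. -/

namespace RedRefinement

variable {E : Type*} [AddCommGroup E] [Module ℝ E]

lemma mem_convexHull_triple_iff {a b c x : E} :
    x ∈ convexHull ℝ {a, b, c} ↔ ∃ α β γ : ℝ, 0 ≤ α ∧ 0 ≤ β ∧ 0 ≤ γ ∧ α + β + γ = 1 ∧
      x = α • a + β • b + γ • c := by
  constructor
  · intro hx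
    rw [convexHull_insert ⟨b, by simp⟩, convexHull_pair] at hx
    obtain ⟨_, rfl, y, ⟨u, v, hu, hv, huv, rfl⟩, t, s, ht, hs, hts, rfl⟩ := mem_convexJoin.mp hx
    exact ⟨t, s * u, s * v, ht, mul_nonneg hs hu, mul_nonneg hs hv,
      by linear_combination hts + s * huv, by module⟩
  · rintro ⟨α, β, γ, hα, hβ, hγ, hs, rfl⟩
    have := Finset.centerMass_mem_convexHull (Finset.univ : Finset (Fin 3))
      (w := ![α, β, γ]) (z := ![a, b, c]) (s := {a, b, c})
      (by intro i _; fin_cases i <;> assumption)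
      (by simp [Fin.sum_univ_three, hs])
      (by intro i _; fin_cases i <;> simp)
    simpa [Finset.centerMass, Fin.sum_univ_three, hs, add_assoc] using this

lemma smul_add_smul_add_smul_mem_convexHull {a b c : E} {α β γ : ℝ} (hα : 0 ≤ α) (hβ : 0 ≤ β)
    (hγ : 0 ≤ γ) (hs : α + β + γ = 1) : α • a + β • b + γ • c ∈ convexHull ℝ {a, b, c} :=
  mem_convexHull_triple_iff.mpr ⟨α, β, γ, hα, hβ, hγ, hs, rfl⟩

lemma convexHull_triple_subset {a b c : E} {s : Set E} (ha : a ∈ convexHull ℝ s)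
    (hb : b ∈ convexHull ℝ s) (hc : c ∈ convexHull ℝ s) :
    convexHull ℝ {a, b, c} ⊆ convexHull ℝ s :=
  convexHull_min (by simp [Set.insert_subset_iff, ha, hb, hc]) (convex_convexHull ℝ s)

lemma midpoint_mem_convexHull {x y : E} {s : Set E} (hx : x ∈ s) (hy : y ∈ s) :
    midpoint ℝ x y ∈ convexHull ℝ s :=
  segment_subset_convexHull hx hy (midpoint_mem_segment x y)

lemma midpoint_eq_half_smul_add_half_smul (x y : E) :
    midpoint ℝ x y = (1 / 2 : ℝ) • x + (1 / 2 : ℝ) • y := by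
  rw [midpoint_eq_smul_add, invOf_eq_inv, smul_add, one_div]

lemma mem_convexHull_corner {a b c : E} {α β γ : ℝ} (hα : 1 / 2 ≤ α) (hβ : 0 ≤ β) (hγ : 0 ≤ γ)
    (hs : α + β + γ = 1) :
    α • a + β • b + γ • c ∈ convexHull ℝ {a, midpoint ℝ a b, midpoint ℝ a c} := by
  have key : α • a + β • b + γ • c =
      (2 * α - 1) • a + (2 * β) • midpoint ℝ a b + (2 * γ) • midpoint ℝ a c := by
    simp only [midpoint_eq_half_smul_add_half_smul]
    match_scalars <;> linarith
  rw [key]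
  exact smul_add_smul_add_smul_mem_convexHull (by linarith) (by linarith) (by linarith)
    (by linarith)

lemma mem_convexHull_middle {a b c : E} {α β γ : ℝ} (hα : α ≤ 1 / 2) (hβ : β ≤ 1 / 2)
    (hγ : γ ≤ 1 / 2) (hs : α + β + γ = 1) :
    α • a + β • b + γ • c ∈
      convexHull ℝ {midpoint ℝ a b, midpoint ℝ b c, midpoint ℝ a c} := by
  have key : α • a + β • b + γ • c = (1 - 2 * γ) • midpoint ℝ a b +
      (1 - 2 * α) • midpoint ℝ b c + (1 - 2 * β) • midpoint ℝ a c := by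
    simp only [midpoint_eq_half_smul_add_half_smul]
    match_scalars <;> linarith
  rw [key]
  exact smul_add_smul_add_smul_mem_convexHull (by linarith) (by linarith) (by linarith)
    (by linarith)

lemma redRefinement_union_subset (a b c : E) :
    convexHull ℝ {a, midpoint ℝ a b, midpoint ℝ a c} ∪
      convexHull ℝ {midpoint ℝ a b, b, midpoint ℝ b c} ∪
      convexHull ℝ {midpoint ℝ a c, midpoint ℝ b c, c} ∪
      convexHull ℝ {midpoint ℝ a b, midpoint ℝ b c, midpoint ℝ a c} ⊆
    convexHull ℝ {a, b, c} := by
  have ha : a ∈ ({a, b, c} : Set E) := by simp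
  have hb : b ∈ ({a, b, c} : Set E) := by simp
  have hc : c ∈ ({a, b, c} : Set E) := by simp
  have hab := midpoint_mem_convexHull ha hb
  have hbc := midpoint_mem_convexHull hb hc
  have hac := midpoint_mem_convexHull ha hc
  have hull := subset_convexHull ℝ ({a, b, c} : Set E)
  refine Set.union_subset (Set.union_subset (Set.union_subset ?_ ?_) ?_) ?_
  · exact convexHull_triple_subset (hull ha) hab hac
  · exact convexHull_triple_subset hab (hull hb) hbc
  · exact convexHull_triple_subset hac hbc (hull hc)
  · exact convexHull_triple_subset hab hbc hac

lemma subset_redRefinement_union (a b c : E) :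
    convexHull ℝ {a, b, c} ⊆
      convexHull ℝ {a, midpoint ℝ a b, midpoint ℝ a c} ∪
      convexHull ℝ {midpoint ℝ a b, b, midpoint ℝ b c} ∪
      convexHull ℝ {midpoint ℝ a c, midpoint ℝ b c, c} ∪
      convexHull ℝ {midpoint ℝ a b, midpoint ℝ b c, midpoint ℝ a c} := by
  intro x hx
  obtain ⟨α, β, γ, hα, hβ, hγ, hs, rfl⟩ := mem_convexHull_triple_iff.mp hx
  by_cases hα' : 1 / 2 ≤ α
  · exact Or.inl <| Or.inl <| Or.inl <| mem_convexHull_corner hα' hβ hγ hs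
  by_cases hβ' : 1 / 2 ≤ β
  · refine Or.inl <| Or.inl <| Or.inr ?_
    have := mem_convexHull_corner (a := b) (b := a) (c := c) hβ' hα hγ (by linarith)
    rw [Set.insert_comm, midpoint_comm] at this
    convert this using 1
    abel
  by_cases hγ' : 1 / 2 ≤ γ
  · refine Or.inl <| Or.inr ?_
    have := mem_convexHull_corner (a := c) (b := a) (c := b) hγ' hα hβ (by linarith)
    rw [Set.insert_comm, Set.pair_comm, midpoint_comm c a, midpoint_comm c b, Set.insert_comm,
      Set.insert_comm (midpoint ℝ b c)] at this
    convert this using 1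
    abel
  · exact Or.inr <| mem_convexHull_middle (by linarith) (by linarith) (by linarith) hs

end RedRefinement

open RedRefinement in
theorem red_refinement_cover_general
    (a b c : EuclideanSpace ℝ (Fin 2)) :
    convexHull ℝ {a, midpoint ℝ a b, midpoint ℝ a c} ∪
      convexHull ℝ {midpoint ℝ a b, b, midpoint ℝ b c} ∪
      convexHull ℝ {midpoint ℝ a c, midpoint ℝ b c, c} ∪
      convexHull ℝ {midpoint ℝ a b, midpoint ℝ b c, midpoint ℝ a c} =
    convexHull ℝ {a, b, c} :=
  subset_antisymm (redRefinement_union_subset a b c) (subset_redRefinement_union a b c)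

/-- Covering property of the red refinement: the four subtriangles obtained by
joining the midpoints of the edges of a triangle cover the triangle. -/
theorem red_refinement_cover
    (a b c : EuclideanSpace ℝ (Fin 2))
    (h : AffineIndependent ℝ ![a, b, c]) :
    convexHull ℝ {a, midpoint ℝ a b, midpoint ℝ a c} ∪
      convexHull ℝ {midpoint ℝ a b, b, midpoint ℝ b c} ∪
      convexHull ℝ {midpoint ℝ a c, midpoint ℝ b c, c} ∪
      convexHull ℝ {midpoint ℝ a b, midpoint ℝ b c, midpoint ℝ a c} =
    convexHull ℝ {a, b, c} :=
  red_refinement_cover_general a b c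
end

section
/- Let a, b, c be affinely independent points in the Euclidean plane and let m_ab, m_bc, m_ac denote the midpoints of the segments ab, bc, ac. Then the topological interiors of the convex hulls of {a, m_ab, m_ac}, {m_ab, b, m_bc}, {m_ac, m_bc, c}, and {m_ab, m_bc, m_ac} are pairwise disjoint. (The four subtriangles of a red refinement have pairwise disjoint interiors.) -/
/-!
Let `λ₀, λ₁, λ₂` be the barycentric coordinates with respect to `a, b, c`. The corner triangle
at the `i`-th vertex lies in the half-plane `λᵢ ≥ 1/2`, and every other subtriangle lies in
`λᵢ ≤ 1/2`, so every pair involving a corner triangle is separated by a line `λᵢ = 1/2`.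
As a nonconstant affine function, `λᵢ` is an open map, hence it sends the interior of a set
contained in a closed half-plane into the corresponding open half-plane.
-/

open Set

theorem IsOpenMap.disjoint_interior_of_subset_preimage {X Y : Type*} [TopologicalSpace X]
    [TopologicalSpace Y] {f : X → Y} (hf : IsOpenMap f) {s t : Set X} {u v : Set Y}
    (hs : s ⊆ f ⁻¹' u) (ht : t ⊆ f ⁻¹' v) (huv : Disjoint (interior u) (interior v)) :
    Disjoint (interior s) (interior t) :=
  (huv.preimage f).mono ((interior_mono hs).trans hf.interior_preimage_subset_preimage_interior)
    ((interior_mono ht).trans hf.interior_preimage_subset_preimage_interior)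

theorem disjoint_interior_convexHull_of_le_of_ge {E : Type*} [AddCommGroup E] [Module ℝ E]
    [TopologicalSpace E] {f : E →ᵃ[ℝ] ℝ} (hf : IsOpenMap f) {s t : Set E} {r : ℝ}
    (hs : ∀ x ∈ s, f x ≤ r) (ht : ∀ x ∈ t, r ≤ f x) :
    Disjoint (interior (convexHull ℝ s)) (interior (convexHull ℝ t)) := by
  refine hf.disjoint_interior_of_subset_preimage (u := Iic r) (v := Ici r)
    (convexHull_min hs ((convex_Iic r).affine_preimage f))
    (convexHull_min ht ((convex_Ici r).affine_preimage f)) ?_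
  rw [interior_Iic, interior_Ici]
  exact Iio_disjoint_Ioi_same

theorem Real.midpoint_eq_add_div_two (x y : ℝ) : midpoint ℝ x y = (x + y) / 2 := by
  rw [midpoint_eq_smul_add, smul_eq_mul, invOf_eq_inv]
  ring

theorem AffineIndependent.exists_affineBasis_of_card_eq_finrank_add_one {ι k V P : Type*}
    [Fintype ι] [DivisionRing k] [AddCommGroup V] [Module k V] [FiniteDimensional k V]
    [AddTorsor V P] {p : ι → P} (hp : AffineIndependent k p)
    (hcard : Fintype.card ι = Module.finrank k V + 1) :
    ∃ B : AffineBasis ι k P, ⇑B = p :=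
  ⟨⟨p, hp, hp.affineSpan_eq_top_iff_card_eq_finrank_add_one.2 hcard⟩, rfl⟩

/-- The four subtriangles of a red refinement have pairwise disjoint
topological interiors. -/
theorem red_refinement_disjoint_interiors
    (a b c : EuclideanSpace ℝ (Fin 2))
    (h : AffineIndependent ℝ ![a, b, c]) :
    Disjoint (interior (convexHull ℝ {a, midpoint ℝ a b, midpoint ℝ a c}))
      (interior (convexHull ℝ {midpoint ℝ a b, b, midpoint ℝ b c})) ∧
    Disjoint (interior (convexHull ℝ {a, midpoint ℝ a b, midpoint ℝ a c}))
      (interior (convexHull ℝ {midpoint ℝ a c, midpoint ℝ b c, c})) ∧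
    Disjoint (interior (convexHull ℝ {a, midpoint ℝ a b, midpoint ℝ a c}))
      (interior (convexHull ℝ {midpoint ℝ a b, midpoint ℝ b c, midpoint ℝ a c})) ∧
    Disjoint (interior (convexHull ℝ {midpoint ℝ a b, b, midpoint ℝ b c}))
      (interior (convexHull ℝ {midpoint ℝ a c, midpoint ℝ b c, c})) ∧
    Disjoint (interior (convexHull ℝ {midpoint ℝ a b, b, midpoint ℝ b c}))
      (interior (convexHull ℝ {midpoint ℝ a b, midpoint ℝ b c, midpoint ℝ a c})) ∧
    Disjoint (interior (convexHull ℝ {midpoint ℝ a c, midpoint ℝ b c, c}))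
      (interior (convexHull ℝ {midpoint ℝ a b, midpoint ℝ b c, midpoint ℝ a c})) := by
  obtain ⟨B, hB⟩ := h.exists_affineBasis_of_card_eq_finrank_add_one (by simp)
  obtain ⟨rfl, rfl, rfl⟩ : B 0 = a ∧ B 1 = b ∧ B 2 = c := by simp [hB]
  have separate (i : Fin 3) {s t : Set (EuclideanSpace ℝ (Fin 2))}
      (hs : ∀ x ∈ s, B.coord i x ≤ 1 / 2) (ht : ∀ x ∈ t, 1 / 2 ≤ B.coord i x) :=
    disjoint_interior_convexHull_of_le_of_ge (isOpenMap_barycentric_coord B i) hs ht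
  refine ⟨separate 1 ?_ ?_, separate 2 ?_ ?_, (separate 0 ?_ ?_).symm, separate 2 ?_ ?_,
    (separate 1 ?_ ?_).symm, (separate 2 ?_ ?_).symm⟩ <;>
  simp [B.coord_apply, Real.midpoint_eq_add_div_two] <;> norm_num
end

section
/- Let a, b, c be affinely independent points in the Euclidean plane and let m_ab, m_bc, m_ac denote the midpoints of the segments ab, bc, ac. Then each corner triangle of the red refinement meets the middle triangle in exactly their common edge, e.g. convexHull{a, m_ab, m_ac} ∩ convexHull{m_ab, m_bc, m_ac} = convexHull{m_ab, m_ac}, and any two distinct corner triangles meet in exactly their single common vertex, e.g. convexHull{a, m_ab, m_ac} ∩ convexHull{m_ab, b, m_bc} = {m_ab}. (The red refinement is conforming: any two of its subtriangles intersect in a common edge or a common vertex.) -/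
/-!
Work in barycentric coordinates `(x, y, z)` with respect to `a, b, c`. Affine independence makes
them unique, so the intersection of two regions described by conditions on the coordinates is
described by the conjunction of the conditions. The corner triangle at `a` is `1/2 ≤ x`, the middle
triangle is `x, y, z ≤ 1/2`, and their common edge is `x = 1/2` (always with nonnegative
coordinates summing to `1`); both intersection formulas then reduce to linear arithmetic. The
other corners follow by permuting `a, b, c`.
-/

section Barycentric

variable {k E : Type*} [Ring k] [AddCommGroup E] [Module k E]

theorem AffineIndependent.eq_of_smul_add_smul_add_smul_eq {a b c : E}
    (h : AffineIndependent k ![a, b, c]) {x y z x' y' z' : k}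
    (hs : x + y + z = 1) (hs' : x' + y' + z' = 1)
    (he : x • a + y • b + z • c = x' • a + y' • b + z' • c) :
    x = x' ∧ y = y' ∧ z = z' := by
  have hw : ∑ i, ![x, y, z] i = 1 := by simpa [Fin.sum_univ_three] using hs
  have hw' : ∑ i, ![x', y', z'] i = 1 := by simpa [Fin.sum_univ_three] using hs'
  have key := (affineIndependent_iff_eq_of_fintype_affineCombination_eq k ![a, b, c]).1 h
    _ _ hw hw' (by
      rw [Finset.affineCombination_eq_linear_combination _ _ _ hw,
        Finset.affineCombination_eq_linear_combination _ _ _ hw']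
      simpa [Fin.sum_univ_three] using he)
  exact ⟨congrFun key 0, congrFun key 1, congrFun key 2⟩

def baryRegion (a b c : E) (P : k → k → k → Prop) : Set E :=
  {p | ∃ x y z : k, P x y z ∧ x + y + z = 1 ∧ x • a + y • b + z • c = p}

variable {a b c : E}

theorem baryRegion_congr {P Q : k → k → k → Prop}
    (h : ∀ x y z, x + y + z = 1 → (P x y z ↔ Q x y z)) :
    baryRegion a b c P = baryRegion a b c Q := by
  ext p
  constructor <;> rintro ⟨x, y, z, hP, hs, rfl⟩
  · exact ⟨x, y, z, (h x y z hs).1 hP, hs, rfl⟩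
  · exact ⟨x, y, z, (h x y z hs).2 hP, hs, rfl⟩

theorem baryRegion_swap (P : k → k → k → Prop) :
    baryRegion b a c P = baryRegion a b c (fun x y z => P y x z) := by
  ext p
  constructor <;> rintro ⟨x, y, z, hP, hs, rfl⟩
  · exact ⟨y, x, z, hP, by rwa [add_comm y x], by abel⟩
  · exact ⟨y, x, z, hP, by rwa [add_comm y x], by abel⟩

theorem AffineIndependent.baryRegion_inter (h : AffineIndependent k ![a, b, c])
    (P Q : k → k → k → Prop) :
    baryRegion a b c P ∩ baryRegion a b c Q =
      baryRegion a b c (fun x y z => P x y z ∧ Q x y z) := by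
  ext p
  constructor
  · rintro ⟨⟨x, y, z, hP, hs, rfl⟩, ⟨x', y', z', hQ, hs', he⟩⟩
    obtain ⟨rfl, rfl, rfl⟩ := h.eq_of_smul_add_smul_add_smul_eq hs' hs he
    exact ⟨x', y', z', ⟨hP, hQ⟩, hs, rfl⟩
  · rintro ⟨x, y, z, ⟨hP, hQ⟩, hs, rfl⟩
    exact ⟨⟨x, y, z, hP, hs, rfl⟩, ⟨x, y, z, hQ, hs, rfl⟩⟩

end Barycentric

section Ordered

variable {k E : Type*} [Field k] [LinearOrder k] [IsStrictOrderedRing k]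
  [AddCommGroup E] [Module k E] {a b c : E}

theorem mem_convexHull_triple_iff {u v w p : E} :
    p ∈ convexHull k {u, v, w} ↔
      ∃ x y z : k, 0 ≤ x ∧ 0 ≤ y ∧ 0 ≤ z ∧ x + y + z = 1 ∧ x • u + y • v + z • w = p := by
  refine ⟨fun hp => convexHull_min (t := {q | ∃ x y z : k, 0 ≤ x ∧ 0 ≤ y ∧ 0 ≤ z ∧
      x + y + z = 1 ∧ x • u + y • v + z • w = q}) ?_ ?_ hp, ?_⟩
  · rintro q (rfl | rfl | rfl)
    · exact ⟨1, 0, 0, by norm_num, by norm_num, by norm_num, by norm_num, by module⟩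
    · exact ⟨0, 1, 0, by norm_num, by norm_num, by norm_num, by norm_num, by module⟩
    · exact ⟨0, 0, 1, by norm_num, by norm_num, by norm_num, by norm_num, by module⟩
  · rintro _ ⟨x, y, z, hx, hy, hz, hs, rfl⟩ _ ⟨x', y', z', hx', hy', hz', hs', rfl⟩ α β hα hβ hαβ
    refine ⟨α * x + β * x', α * y + β * y', α * z + β * z', by positivity, by positivity,
      by positivity, by linear_combination α * hs + β * hs' + hαβ, by module⟩
  · rintro ⟨x, y, z, hx, hy, hz, hs, rfl⟩
    have hmem := (convex_convexHull k ({u, v, w} : Set E)).sum_mem (t := Finset.univ)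
      (w := ![x, y, z]) (z := ![u, v, w])
    simp only [Finset.mem_univ, forall_const, Fin.forall_fin_succ, Matrix.cons_val_zero,
      Matrix.cons_val_succ, Matrix.cons_val_fin_one, Fin.sum_univ_three, Matrix.cons_val_one,
      Matrix.cons_val, and_imp] at hmem
    exact hmem hx hy hz hs (subset_convexHull k _ (by simp)) (subset_convexHull k _ (by simp))
      (subset_convexHull k _ (by simp))

theorem convexHull_corner_eq_baryRegion :
    convexHull k {a, midpoint k a b, midpoint k a c} =
      baryRegion a b c (fun x y z : k => 1 / 2 ≤ x ∧ 0 ≤ y ∧ 0 ≤ z) := by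
  ext p
  simp only [mem_convexHull_triple_iff, baryRegion, Set.mem_ofPred_eq, midpoint_eq_smul_add,
    invOf_eq_inv]
  constructor
  · rintro ⟨s, t, u, hs, ht, hu, hsum, rfl⟩
    exact ⟨s + t / 2 + u / 2, t / 2, u / 2, ⟨by linarith, by linarith, by linarith⟩,
      by linarith, by module⟩
  · rintro ⟨x, y, z, ⟨hx, hy, hz⟩, hsum, rfl⟩
    exact ⟨x - y - z, 2 * y, 2 * z, by linarith, by linarith, by linarith, by linarith,
      by module⟩

theorem convexHull_midpoints_eq_baryRegion :
    convexHull k {midpoint k a b, midpoint k b c, midpoint k a c} =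
      baryRegion a b c (fun x y z : k => x ≤ 1 / 2 ∧ y ≤ 1 / 2 ∧ z ≤ 1 / 2) := by
  ext p
  simp only [mem_convexHull_triple_iff, baryRegion, Set.mem_ofPred_eq, midpoint_eq_smul_add,
    invOf_eq_inv]
  constructor
  · rintro ⟨s, t, u, hs, ht, hu, hsum, rfl⟩
    exact ⟨(s + u) / 2, (s + t) / 2, (t + u) / 2, ⟨by linarith, by linarith, by linarith⟩,
      by linarith, by module⟩
  · rintro ⟨x, y, z, ⟨hx, hy, hz⟩, hsum, rfl⟩
    exact ⟨x + y - z, y + z - x, x + z - y, by linarith, by linarith, by linarith, by linarith,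
      by module⟩

theorem convexHull_midpoint_pair_eq_baryRegion :
    convexHull k {midpoint k a b, midpoint k a c} =
      baryRegion a b c (fun x y z : k => x = 1 / 2 ∧ 0 ≤ y ∧ 0 ≤ z) := by
  ext p
  simp only [convexHull_pair, segment, baryRegion, Set.mem_ofPred_eq, midpoint_eq_smul_add,
    invOf_eq_inv]
  constructor
  · rintro ⟨t, u, ht, hu, hsum, rfl⟩
    exact ⟨(t + u) / 2, t / 2, u / 2, ⟨by linarith, by linarith, by linarith⟩, by linarith,
      by module⟩
  · rintro ⟨x, y, z, ⟨hx, hy, hz⟩, hsum, rfl⟩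
    obtain rfl : x = y + z := by linarith
    exact ⟨2 * y, 2 * z, by linarith, by linarith, by linarith, by module⟩

theorem baryRegion_eq_midpoint :
    baryRegion a b c (fun x y _ => x = (1 / 2 : k) ∧ y = 1 / 2) = {midpoint k a b} := by
  ext p
  simp only [baryRegion, Set.mem_ofPred_eq, Set.mem_singleton_iff, midpoint_eq_smul_add,
    invOf_eq_inv]
  constructor
  · rintro ⟨x, y, z, ⟨rfl, rfl⟩, hsum, rfl⟩
    obtain rfl : z = 0 := by linarith
    module
  · rintro rfl
    exact ⟨1 / 2, 1 / 2, 0, ⟨rfl, rfl⟩, by norm_num, by module⟩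

theorem AffineIndependent.convexHull_corner_inter_midpoints (h : AffineIndependent k ![a, b, c]) :
    convexHull k {a, midpoint k a b, midpoint k a c} ∩
        convexHull k {midpoint k a b, midpoint k b c, midpoint k a c} =
      convexHull k {midpoint k a b, midpoint k a c} := by
  rw [convexHull_corner_eq_baryRegion, convexHull_midpoints_eq_baryRegion, h.baryRegion_inter,
    convexHull_midpoint_pair_eq_baryRegion]
  refine baryRegion_congr fun x y z _ => ⟨?_, ?_⟩
  · rintro ⟨⟨hx, hy, hz⟩, hx', -, -⟩
    exact ⟨le_antisymm hx' hx, hy, hz⟩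
  · rintro ⟨hx, hy, hz⟩
    exact ⟨⟨hx.ge, hy, hz⟩, hx.le, by linarith, by linarith⟩

theorem AffineIndependent.convexHull_corner_inter_corner (h : AffineIndependent k ![a, b, c]) :
    convexHull k {a, midpoint k a b, midpoint k a c} ∩
        convexHull k {midpoint k a b, b, midpoint k b c} =
      {midpoint k a b} := by
  have hb : convexHull k {midpoint k a b, b, midpoint k b c} =
      baryRegion a b c (fun x y z : k => 0 ≤ x ∧ 1 / 2 ≤ y ∧ 0 ≤ z) := by
    rw [Set.insert_comm, midpoint_comm a b, convexHull_corner_eq_baryRegion, baryRegion_swap]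
    exact baryRegion_congr fun x y z _ => by tauto
  rw [convexHull_corner_eq_baryRegion, hb, h.baryRegion_inter, ← baryRegion_eq_midpoint]
  refine baryRegion_congr fun x y z hs => ⟨?_, ?_⟩
  · rintro ⟨⟨hx, -, hz⟩, -, hy, -⟩
    constructor <;> linarith
  · rintro ⟨rfl, rfl⟩
    have hz : z = 0 := by linarith
    norm_num [hz]

end Ordered

section Collinear

variable {k V P : Type*} [Field k] [AddCommGroup V] [Module k V] [AddTorsor V P] {a b c : P}

theorem AffineIndependent.of_triple_set_eq (h : AffineIndependent k ![a, b, c]) {p q r : P}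
    (hs : ({p, q, r} : Set P) = {a, b, c}) : AffineIndependent k ![p, q, r] := by
  rwa [affineIndependent_iff_not_collinear_set, hs, ← affineIndependent_iff_not_collinear_set]

end Collinear

/-- The red refinement is conforming: each corner triangle meets the middle
triangle in exactly their common edge, and any two distinct corner triangles
meet in exactly their single common vertex. -/
theorem red_refinement_conforming
    (a b c : EuclideanSpace ℝ (Fin 2))
    (h : AffineIndependent ℝ ![a, b, c]) :
    convexHull ℝ {a, midpoint ℝ a b, midpoint ℝ a c} ∩
        convexHull ℝ {midpoint ℝ a b, midpoint ℝ b c, midpoint ℝ a c} =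
      convexHull ℝ {midpoint ℝ a b, midpoint ℝ a c} ∧
    convexHull ℝ {midpoint ℝ a b, b, midpoint ℝ b c} ∩
        convexHull ℝ {midpoint ℝ a b, midpoint ℝ b c, midpoint ℝ a c} =
      convexHull ℝ {midpoint ℝ a b, midpoint ℝ b c} ∧
    convexHull ℝ {midpoint ℝ a c, midpoint ℝ b c, c} ∩
        convexHull ℝ {midpoint ℝ a b, midpoint ℝ b c, midpoint ℝ a c} =
      convexHull ℝ {midpoint ℝ a c, midpoint ℝ b c} ∧
    convexHull ℝ {a, midpoint ℝ a b, midpoint ℝ a c} ∩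
        convexHull ℝ {midpoint ℝ a b, b, midpoint ℝ b c} =
      {midpoint ℝ a b} ∧
    convexHull ℝ {a, midpoint ℝ a b, midpoint ℝ a c} ∩
        convexHull ℝ {midpoint ℝ a c, midpoint ℝ b c, c} =
      {midpoint ℝ a c} ∧
    convexHull ℝ {midpoint ℝ a b, b, midpoint ℝ b c} ∩
        convexHull ℝ {midpoint ℝ a c, midpoint ℝ b c, c} =
      {midpoint ℝ b c} := by
  have hbac := (h.of_triple_set_eq (Set.insert_comm b a {c})).convexHull_corner_inter_midpoints
  have hcab := (h.of_triple_set_eq (p := c) (q := a) (r := b)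
    (by rw [Set.insert_comm c a, Set.pair_comm c b])).convexHull_corner_inter_midpoints
  have hacb := (h.of_triple_set_eq (p := a) (q := c) (r := b)
    (by rw [Set.pair_comm c b])).convexHull_corner_inter_corner
  have hbca := (h.of_triple_set_eq (p := b) (q := c) (r := a)
    (by rw [Set.pair_comm c a, Set.insert_comm b a])).convexHull_corner_inter_corner
  simp only [midpoint_comm b a, midpoint_comm c a, midpoint_comm c b] at hbac hcab hacb hbca
  refine ⟨h.convexHull_corner_inter_midpoints, ?_, ?_, h.convexHull_corner_inter_corner, ?_, ?_⟩
  · convert hbac using 3 <;> ext <;> simp only [Set.mem_insert_iff, Set.mem_singleton_iff] <;> tauto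
  · convert hcab using 3 <;> ext <;> simp only [Set.mem_insert_iff, Set.mem_singleton_iff] <;> tauto
  · convert hacb using 3 <;> ext <;> simp only [Set.mem_insert_iff, Set.mem_singleton_iff] <;> tauto
  · convert hbca using 3 <;> ext <;> simp only [Set.mem_insert_iff, Set.mem_singleton_iff] <;> tauto
end

section
/- Let a, b, c be affinely independent points in the Euclidean plane and let m denote the midpoint of the segment ab. Then the union of the convex hulls of {a, m, c} and {m, b, c} equals the convex hull of {a, b, c}. (Covering property of the green refinement: bisecting a triangle by joining the midpoint of one edge to the opposite vertex yields two subtriangles covering the triangle.) -/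
/-!
The triangle `{a, b, c}` is the convex join of its edge `[a, b]` with the vertex `c`, and convex
joins distribute over unions; so it suffices that any point `z` of `[a, b]`, here the midpoint,
splits the edge as `[a, z] ∪ [z, b]`.
-/

open Set

section Between

variable {R V P : Type*} [Field R] [LinearOrder R] [IsStrictOrderedRing R] [AddCommGroup V]
  [Module R V] [AddTorsor V P]

theorem Wbtw.wbtw_or_wbtw_of_wbtw {x y z p : P} (hz : Wbtw R x z y) (hp : Wbtw R x p y) :
    Wbtw R x p z ∨ Wbtw R z p y := by
  have hray : SameRay R (p -ᵥ x) (z -ᵥ x) := by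
    refine hp.sameRay_vsub_left.trans hz.sameRay_vsub_left.symm fun hyx => Or.inl ?_
    rw [vsub_eq_zero_iff_eq] at hyx ⊢
    subst hyx
    exact (wbtw_self_iff R).1 hp
  rcases wbtw_total_of_sameRay_vsub_left hray with hpz | hzp
  · exact Or.inl hpz
  · exact Or.inr (hp.trans_left_right hzp)

end Between

section Segment

variable {𝕜 E : Type*} [Field 𝕜] [LinearOrder 𝕜] [IsStrictOrderedRing 𝕜] [AddCommGroup E]
  [Module 𝕜 E]

theorem segment_union_segment_of_mem_segment {x y z : E} (hz : z ∈ segment 𝕜 x y) :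
    segment 𝕜 x z ∪ segment 𝕜 z y = segment 𝕜 x y := by
  refine Subset.antisymm (union_subset ?_ ?_) fun p hp => ?_
  · exact (convex_segment x y).segment_subset (left_mem_segment 𝕜 x y) hz
  · exact (convex_segment x y).segment_subset hz (right_mem_segment 𝕜 x y)
  simp only [mem_union, mem_segment_iff_wbtw] at hz hp ⊢
  exact hz.wbtw_or_wbtw_of_wbtw hp

theorem convexHull_union_convexHull_of_mem_segment {a b c z : E} (hz : z ∈ segment 𝕜 a b) :
    convexHull 𝕜 {a, z, c} ∪ convexHull 𝕜 {z, b, c} = convexHull 𝕜 {a, b, c} := by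
  simp only [← convexJoin_segment_singleton, ← convexJoin_union_left,
    segment_union_segment_of_mem_segment hz]

end Segment

theorem green_refinement_cover_general
    (a b c : EuclideanSpace ℝ (Fin 2)) :
    convexHull ℝ {a, midpoint ℝ a b, c} ∪ convexHull ℝ {midpoint ℝ a b, b, c} =
      convexHull ℝ {a, b, c} :=
  convexHull_union_convexHull_of_mem_segment (midpoint_mem_segment a b)

/-- Covering property of the green refinement: bisecting a triangle by joining
the midpoint of one edge to the opposite vertex yields two subtriangles
covering the triangle. -/
theorem green_refinement_cover
    (a b c : EuclideanSpace ℝ (Fin 2))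
    (h : AffineIndependent ℝ ![a, b, c]) :
    convexHull ℝ {a, midpoint ℝ a b, c} ∪ convexHull ℝ {midpoint ℝ a b, b, c} =
      convexHull ℝ {a, b, c} :=
  green_refinement_cover_general a b c
end

section
/- Let a, b, c be affinely independent points in the Euclidean plane and let m denote the midpoint of the segment ab. Then the two subtriangles of the green refinement intersect exactly in the bisecting segment, i.e. convexHull{a, m, c} ∩ convexHull{m, b, c} = convexHull{m, c}, and their topological interiors are disjoint. (The green refinement is conforming: the two children meet in a common edge.) -/
/-!
Write a common point of the children as `x = s₁ a + t₁ m + u₁ c = s₂ m + t₂ b + u₂ c`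
(convex weights) and expand `m = μ a + ν b` with `μ, ν > 0`. Affine independence of `a, b, c`
lets us compare coefficients: those of `b` give `ν (t₁ - s₂) = t₂ ≥ 0`, and then those of `a`
give `s₁ = μ (s₂ - t₁) ≤ 0`, so `s₁ = 0` and `x ∈ [m, c]`. The interiors are disjoint because
their intersection is the interior of a segment, which is empty in the plane.
-/

open Set

variable {𝕜 V : Type*} [Field 𝕜] [AddCommGroup V] [Module 𝕜 V]

theorem AffineIndependent.eq_zero_of_sum_eq_zero_three {a b c : V}
    (h : AffineIndependent 𝕜 ![a, b, c]) {α β γ : 𝕜} (hsum : α + β + γ = 0)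
    (hcomb : α • a + β • b + γ • c = 0) : α = 0 ∧ β = 0 ∧ γ = 0 := by
  have := h.eq_zero_of_sum_eq_zero (s := Finset.univ) (w := ![α, β, γ])
    (by simpa [Fin.sum_univ_three] using hsum) (by simpa [Fin.sum_univ_three] using hcomb)
  exact ⟨this 0 (by simp), this 1 (by simp), this 2 (by simp)⟩

variable [LinearOrder 𝕜] [IsStrictOrderedRing 𝕜]

theorem mem_convexHull_triple_iff_s7 {p q r x : V} :
    x ∈ convexHull 𝕜 {p, q, r} ↔
      ∃ α β γ : 𝕜, 0 ≤ α ∧ 0 ≤ β ∧ 0 ≤ γ ∧ α + β + γ = 1 ∧ α • p + β • q + γ • r = x := by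
  constructor
  · rw [convexHull_insert (insert_nonempty q {r}), convexHull_pair, mem_convexJoin]
    rintro ⟨_, rfl, _, ⟨u, v, hu, hv, huv, rfl⟩, s, t, hs, ht, hst, rfl⟩
    refine ⟨s, t * u, t * v, hs, by positivity, by positivity, ?_, ?_⟩
    · linear_combination hst + t * huv
    · simp only [smul_add, mul_smul]; abel
  · rintro ⟨α, β, γ, hα, hβ, hγ, hsum, rfl⟩
    exact mem_convexHull_of_exists_fintype ![α, β, γ] ![p, q, r]
      (fun i => by fin_cases i <;> simpa) (by simp [Fin.sum_univ_three, hsum])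
      (fun i => by fin_cases i <;> simp) (by simp [Fin.sum_univ_three])

theorem convexHull_inter_convexHull_of_mem_openSegment {a b c m : V}
    (h : AffineIndependent 𝕜 ![a, b, c]) (hm : m ∈ openSegment 𝕜 a b) :
    convexHull 𝕜 {a, m, c} ∩ convexHull 𝕜 {m, b, c} = convexHull 𝕜 {m, c} := by
  refine Subset.antisymm ?_ (subset_inter (convexHull_mono (by grind)) (convexHull_mono (by grind)))
  rintro x ⟨hx₁, hx₂⟩
  obtain ⟨μ, ν, hμ, hν, hμν, rfl⟩ := hm
  obtain ⟨s₁, t₁, u₁, hs₁, ht₁, hu₁, hsum₁, rfl⟩ := mem_convexHull_triple_iff_s7.mp hx₁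
  obtain ⟨s₂, t₂, u₂, -, ht₂, -, hsum₂, hx⟩ := mem_convexHull_triple_iff_s7.mp hx₂
  obtain ⟨ha, hb, -⟩ := h.eq_zero_of_sum_eq_zero_three (α := s₁ + μ * (t₁ - s₂))
    (β := ν * (t₁ - s₂) - t₂) (γ := u₁ - u₂)
    (by linear_combination (hsum₁ - hsum₂) + (t₁ - s₂) * hμν)
    (by rw [← sub_eq_zero.mpr hx.symm]; module)
  have hs₁_eq : s₁ = 0 := by
    have : 0 ≤ t₁ - s₂ := by nlinarith
    nlinarith
  rw [convexHull_pair]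
  exact ⟨t₁, u₁, ht₁, hu₁, by linarith, by simp [hs₁_eq]⟩

theorem interior_convexHull_eq_empty_of_collinear {E : Type*} [NormedAddCommGroup E]
    [NormedSpace ℝ E] (hE : 1 < Module.finrank ℝ E) {s : Set E} (hs : Collinear ℝ s) :
    interior (convexHull ℝ s) = ∅ := by
  by_contra hne
  have hspan : vectorSpan ℝ s = ⊤ := by
    rw [← direction_affineSpan, affineSpan_eq_top_of_nonempty_interior
      (nonempty_iff_ne_empty.mpr hne), AffineSubspace.direction_top]
  have : FiniteDimensional ℝ E := Module.finite_of_finrank_pos (by omega)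
  have := hs.finrank_le_one
  rw [hspan, finrank_top] at this
  omega

/-- The green refinement is conforming: the two children meet exactly in the
bisecting segment, and their topological interiors are disjoint. -/
theorem green_refinement_conforming
    (a b c : EuclideanSpace ℝ (Fin 2))
    (h : AffineIndependent ℝ ![a, b, c]) :
    convexHull ℝ {a, midpoint ℝ a b, c} ∩ convexHull ℝ {midpoint ℝ a b, b, c} =
      convexHull ℝ {midpoint ℝ a b, c} ∧
    Disjoint (interior (convexHull ℝ {a, midpoint ℝ a b, c}))
      (interior (convexHull ℝ {midpoint ℝ a b, b, c})) := by
  have hinter := convexHull_inter_convexHull_of_mem_openSegment h (midpoint_mem_openSegment a b)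
  refine ⟨hinter, ?_⟩
  rw [disjoint_iff_inter_eq_empty, ← interior_inter, hinter]
  exact interior_convexHull_eq_empty_of_collinear (by simp) (collinear_pair ℝ _ _)
end

section
/- Let a, b, c be affinely independent points in the Euclidean plane, let m denote the midpoint of the segment ab, let p denote the midpoint of segment ac and q the midpoint of segment bc. Then the four subtriangles of the bisec(3) refinement of (a, b, c), namely the triangles (a, m, p), (p, m, c), (m, b, q), (q, m, c) obtained by joining m to the opposite vertex c and to the midpoints p of ac and q of bc, cover the triangle: convexHull{a, m, p} ∪ convexHull{p, m, c} ∪ convexHull{m, b, q} ∪ convexHull{q, m, c} = convexHull{a, b, c}; moreover their topological interiors are pairwise disjoint and each of the four vertex triples is affinely independent. -/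
open Finset

private lemma range_triple (x y z : EuclideanSpace ℝ (Fin 2)) :
    Set.range ![x, y, z] = {x, y, z} := by
  ext v
  constructor
  · rintro ⟨i, rfl⟩; fin_cases i <;> simp
  · rintro (rfl | rfl | rfl)
    exacts [⟨0, rfl⟩, ⟨1, rfl⟩, ⟨2, rfl⟩]

private lemma triple_indep_iff {x y z : EuclideanSpace ℝ (Fin 2)} :
    AffineIndependent ℝ ![x, y, z] ↔
      ∀ w₀ w₁ w₂ : ℝ, w₀ + w₁ + w₂ = 0 → w₀ • x + w₁ • y + w₂ • z = 0 →
        w₀ = 0 ∧ w₁ = 0 ∧ w₂ = 0 := by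
  rw [affineIndependent_iff_of_fintype]
  constructor
  · intro H w₀ w₁ w₂ hs hc
    have := H ![w₀, w₁, w₂] (by simp [Fin.sum_univ_three, hs])
      (by rw [Finset.univ.weightedVSub_eq_linear_combination (by simp [Fin.sum_univ_three, hs])]
          simpa [Fin.sum_univ_three] using hc)
    exact ⟨this 0, this 1, this 2⟩
  · intro H w hs hv
    rw [Finset.univ.weightedVSub_eq_linear_combination
      (by simpa using hs)] at hv
    simp [Fin.sum_univ_three] at hs hv
    obtain ⟨h0, h1, h2⟩ := H (w 0) (w 1) (w 2) hs hv
    intro i; fin_cases i <;> assumption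

private lemma mem_hull_triple {x y z v : EuclideanSpace ℝ (Fin 2)} :
    v ∈ convexHull ℝ ({x, y, z} : Set (EuclideanSpace ℝ (Fin 2))) ↔
      ∃ α β γ : ℝ, 0 ≤ α ∧ 0 ≤ β ∧ 0 ≤ γ ∧ α + β + γ = 1 ∧ α • x + β • y + γ • z = v := by
  constructor
  · intro hv
    rw [show ({x, y, z} : Set (EuclideanSpace ℝ (Fin 2))) = insert x {y, z} from rfl,
      convexHull_insert ⟨y, by simp⟩, mem_convexJoin] at hv
    obtain ⟨x', hx', w, hw, hseg⟩ := hv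
    rw [Set.mem_singleton_iff] at hx'
    subst hx'
    rw [convexHull_pair] at hw
    obtain ⟨β', γ', hβ', hγ', hbg, rfl⟩ := hw
    obtain ⟨α, t, hα, ht, hat, hc⟩ := hseg
    exact ⟨α, t * β', t * γ', hα, by positivity, by positivity,
      by linear_combination t * hbg + hat, by rw [← hc]; module⟩
  · rintro ⟨α, β, γ, hα, hβ, hγ, hsum, rfl⟩
    have := affineCombination_mem_convexHull (s := Finset.univ) (v := ![x, y, z]) (w := ![α, β, γ])
      (by intro i _; fin_cases i <;> assumption) (by simp [Fin.sum_univ_three, hsum])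
    rw [Finset.univ.affineCombination_eq_linear_combination _ _
      (by simp [Fin.sum_univ_three, hsum]), range_triple] at this
    simpa [Fin.sum_univ_three] using this

private lemma triple_unique {x y z : EuclideanSpace ℝ (Fin 2)}
    (h : AffineIndependent ℝ ![x, y, z]) {α β γ α' β' γ' : ℝ}
    (h1 : α + β + γ = 1) (h2 : α' + β' + γ' = 1)
    (he : α • x + β • y + γ • z = α' • x + β' • y + γ' • z) :
    α = α' ∧ β = β' ∧ γ = γ' := by
  have hz : (α - α') • x + (β - β') • y + (γ - γ') • z = 0 := by
    have e : (α - α') • x + (β - β') • y + (γ - γ') • z =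
        (α • x + β • y + γ • z) - (α' • x + β' • y + γ' • z) := by module
    rw [e, he, sub_self]
  obtain ⟨e0, e1, e2⟩ := triple_indep_iff.1 h (α - α') (β - β') (γ - γ') (by linarith) hz
  exact ⟨by linarith, by linarith, by linarith⟩

private lemma mem_interior_hull_triple {x y z v : EuclideanSpace ℝ (Fin 2)}
    (h : AffineIndependent ℝ ![x, y, z]) :
    v ∈ interior (convexHull ℝ ({x, y, z} : Set (EuclideanSpace ℝ (Fin 2)))) ↔
      ∃ α β γ : ℝ, 0 < α ∧ 0 < β ∧ 0 < γ ∧ α + β + γ = 1 ∧ α • x + β • y + γ • z = v := by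
  have htop : affineSpan ℝ (Set.range ![x, y, z]) = ⊤ := by
    rw [h.affineSpan_eq_top_iff_card_eq_finrank_add_one]
    simp
  let B : AffineBasis (Fin 3) ℝ (EuclideanSpace ℝ (Fin 2)) := ⟨![x, y, z], h, htop⟩
  have hBc : ⇑B = ![x, y, z] := rfl
  have hB : Set.range (⇑B) = {x, y, z} := by rw [hBc]; exact range_triple x y z
  rw [← hB, B.interior_convexHull]
  have key : ∀ (α β γ : ℝ), α + β + γ = 1 → ∀ j : Fin 3,
      B.coord j (α • x + β • y + γ • z) = ![α, β, γ] j := by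
    intro α β γ hsum j
    have hw : ∑ i, (![α, β, γ]) i = 1 := by simp [Fin.sum_univ_three, hsum]
    have := B.coord_apply_combination_of_mem (mem_univ j) hw
    rw [Finset.univ.affineCombination_eq_linear_combination _ _ hw] at this
    rw [← this]
    congr 1
    simp [hBc, Fin.sum_univ_three]
  constructor
  · intro hv
    have hs : ∑ i, B.coord i v = 1 := B.sum_coord_apply_eq_one v
    refine ⟨B.coord 0 v, B.coord 1 v, B.coord 2 v, hv 0, hv 1, hv 2,
      by rw [Fin.sum_univ_three] at hs; exact hs, ?_⟩
    have := B.affineCombination_coord_eq_self v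
    rw [Finset.univ.affineCombination_eq_linear_combination _ _ hs] at this
    conv_rhs => rw [← this]
    simp [hBc, Fin.sum_univ_three]
  · rintro ⟨α, β, γ, hα, hβ, hγ, hsum, rfl⟩
    intro i
    rw [key α β γ hsum i]
    fin_cases i <;> simpa

set_option maxHeartbeats 1600000 in
/-- The four subtriangles of the bisec(3) refinement of a triangle (a, b, c)
with reference edge ab — obtained by joining the midpoint m of ab to the
opposite vertex c and to the midpoints p of ac and q of bc — cover the
triangle, have pairwise disjoint topological interiors, and each vertex triple
is affinely independent. -/
theorem bisec3_refinement
    (a b c m p q : EuclideanSpace ℝ (Fin 2))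
    (h : AffineIndependent ℝ ![a, b, c])
    (hm : m = midpoint ℝ a b) (hp : p = midpoint ℝ a c) (hq : q = midpoint ℝ b c) :
    (convexHull ℝ {a, m, p} ∪ convexHull ℝ {p, m, c} ∪
        convexHull ℝ {m, b, q} ∪ convexHull ℝ {q, m, c} =
      convexHull ℝ {a, b, c}) ∧
    Disjoint (interior (convexHull ℝ {a, m, p})) (interior (convexHull ℝ {p, m, c})) ∧
    Disjoint (interior (convexHull ℝ {a, m, p})) (interior (convexHull ℝ {m, b, q})) ∧
    Disjoint (interior (convexHull ℝ {a, m, p})) (interior (convexHull ℝ {q, m, c})) ∧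
    Disjoint (interior (convexHull ℝ {p, m, c})) (interior (convexHull ℝ {m, b, q})) ∧
    Disjoint (interior (convexHull ℝ {p, m, c})) (interior (convexHull ℝ {q, m, c})) ∧
    Disjoint (interior (convexHull ℝ {m, b, q})) (interior (convexHull ℝ {q, m, c})) ∧
    AffineIndependent ℝ ![a, m, p] ∧
    AffineIndependent ℝ ![p, m, c] ∧
    AffineIndependent ℝ ![m, b, q] ∧
    AffineIndependent ℝ ![q, m, c] := by
  have hmid : ∀ u v : EuclideanSpace ℝ (Fin 2),
      midpoint ℝ u v = (1/2 : ℝ) • u + (1/2 : ℝ) • v := by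
    intro u v
    rw [midpoint_eq_smul_add, smul_add]
    norm_num
  have hm' : m = (1/2 : ℝ) • a + (1/2 : ℝ) • b := by rw [hm, hmid]
  have hp' : p = (1/2 : ℝ) • a + (1/2 : ℝ) • c := by rw [hp, hmid]
  have hq' : q = (1/2 : ℝ) • b + (1/2 : ℝ) • c := by rw [hq, hmid]
  have hiff := triple_indep_iff.1 h
  have hT1 : AffineIndependent ℝ ![a, m, p] := by
    rw [triple_indep_iff]
    intro w0 w1 w2 hs hc
    rw [hm', hp'] at hc
    obtain ⟨e0, e1, e2⟩ := hiff (w0 + w1/2 + w2/2) (w1/2) (w2/2) (by linarith)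
      (by rw [← hc]; module)
    exact ⟨by linarith, by linarith, by linarith⟩
  have hT2 : AffineIndependent ℝ ![p, m, c] := by
    rw [triple_indep_iff]
    intro w0 w1 w2 hs hc
    rw [hm', hp'] at hc
    obtain ⟨e0, e1, e2⟩ := hiff (w0/2 + w1/2) (w1/2) (w0/2 + w2) (by linarith)
      (by rw [← hc]; module)
    exact ⟨by linarith, by linarith, by linarith⟩
  have hT3 : AffineIndependent ℝ ![m, b, q] := by
    rw [triple_indep_iff]
    intro w0 w1 w2 hs hc
    rw [hm', hq'] at hc
    obtain ⟨e0, e1, e2⟩ := hiff (w0/2) (w0/2 + w1 + w2/2) (w2/2) (by linarith)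
      (by rw [← hc]; module)
    exact ⟨by linarith, by linarith, by linarith⟩
  have hT4 : AffineIndependent ℝ ![q, m, c] := by
    rw [triple_indep_iff]
    intro w0 w1 w2 hs hc
    rw [hm', hq'] at hc
    obtain ⟨e0, e1, e2⟩ := hiff (w1/2) (w0/2 + w1/2) (w0/2 + w2) (by linarith)
      (by rw [← hc]; module)
    exact ⟨by linarith, by linarith, by linarith⟩
  refine ⟨?_, ?_, ?_, ?_, ?_, ?_, ?_, hT1, hT2, hT3, hT4⟩
  · -- coverage
    ext u
    simp only [Set.mem_union]
    constructor
    · rintro (((h1 | h2) | h3) | h4)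
      · obtain ⟨α, β, γ, hα, hβ, hγ, hs, hc⟩ := mem_hull_triple.1 h1
        exact mem_hull_triple.2 ⟨α + β/2 + γ/2, β/2, γ/2, by linarith, by linarith, by linarith,
          by linarith, by rw [← hc, hm', hp']; module⟩
      · obtain ⟨α, β, γ, hα, hβ, hγ, hs, hc⟩ := mem_hull_triple.1 h2
        exact mem_hull_triple.2 ⟨α/2 + β/2, β/2, α/2 + γ, by linarith, by linarith, by linarith,
          by linarith, by rw [← hc, hm', hp']; module⟩
      · obtain ⟨α, β, γ, hα, hβ, hγ, hs, hc⟩ := mem_hull_triple.1 h3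
        exact mem_hull_triple.2 ⟨α/2, α/2 + β + γ/2, γ/2, by linarith, by linarith, by linarith,
          by linarith, by rw [← hc, hm', hq']; module⟩
      · obtain ⟨α, β, γ, hα, hβ, hγ, hs, hc⟩ := mem_hull_triple.1 h4
        exact mem_hull_triple.2 ⟨β/2, α/2 + β/2, α/2 + γ, by linarith, by linarith, by linarith,
          by linarith, by rw [← hc, hm', hq']; module⟩
    · intro hu
      obtain ⟨α, β, γ, hα, hβ, hγ, hs, hc⟩ := mem_hull_triple.1 hu
      have hc' : α • a + β • b + (1 - α - β) • c = u := by
        rw [show (1 - α - β : ℝ) = γ by linarith]; exact hc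
      by_cases hA : (1:ℝ)/2 ≤ α
      · refine Or.inl (Or.inl (Or.inl (mem_hull_triple.2
          ⟨2*α - 1, 2*β, 2*(1 - α - β), by linarith, by linarith, by linarith, by linarith, ?_⟩)))
        rw [← hc', hm', hp']; module
      · by_cases hB : (1:ℝ)/2 ≤ β
        · refine Or.inl (Or.inr (mem_hull_triple.2
            ⟨2*α, 2*β - 1, 2*(1 - α - β), by linarith, by linarith, by linarith, by linarith, ?_⟩))
          rw [← hc', hm', hq']; module
        · by_cases hC : β ≤ α
          · refine Or.inl (Or.inl (Or.inr (mem_hull_triple.2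
              ⟨2*(α - β), 2*β, 1 - 2*α, by linarith, by linarith, by linarith, by linarith, ?_⟩)))
            rw [← hc', hm', hp']; module
          · refine Or.inr (mem_hull_triple.2
              ⟨2*(β - α), 2*α, 1 - 2*β, by linarith, by linarith, by linarith, by linarith, ?_⟩)
            rw [← hc', hm', hq']; module
  · rw [Set.disjoint_left]
    intro u hu1 hu2
    obtain ⟨α1, β1, γ1, hα1, hβ1, hγ1, hs1, hc1⟩ := (mem_interior_hull_triple hT1).1 hu1
    obtain ⟨α2, β2, γ2, hα2, hβ2, hγ2, hs2, hc2⟩ := (mem_interior_hull_triple hT2).1 hu2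
    have e1 : (α1+β1/2+γ1/2) • a + (β1/2) • b + (γ1/2) • c = u := by
      rw [← hc1, hm', hp']; module
    have e2 : (α2/2+β2/2) • a + (β2/2) • b + (α2/2+γ2) • c = u := by
      rw [← hc2, hm', hp']; module
    obtain ⟨ea, eb, ec⟩ := triple_unique h (by linarith) (by linarith) (e1.trans e2.symm)
    linarith
  · rw [Set.disjoint_left]
    intro u hu1 hu2
    obtain ⟨α1, β1, γ1, hα1, hβ1, hγ1, hs1, hc1⟩ := (mem_interior_hull_triple hT1).1 hu1
    obtain ⟨α2, β2, γ2, hα2, hβ2, hγ2, hs2, hc2⟩ := (mem_interior_hull_triple hT3).1 hu2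
    have e1 : (α1+β1/2+γ1/2) • a + (β1/2) • b + (γ1/2) • c = u := by
      rw [← hc1, hm', hp']; module
    have e2 : (α2/2) • a + (α2/2+β2+γ2/2) • b + (γ2/2) • c = u := by
      rw [← hc2, hm', hq']; module
    obtain ⟨ea, eb, ec⟩ := triple_unique h (by linarith) (by linarith) (e1.trans e2.symm)
    linarith
  · rw [Set.disjoint_left]
    intro u hu1 hu2
    obtain ⟨α1, β1, γ1, hα1, hβ1, hγ1, hs1, hc1⟩ := (mem_interior_hull_triple hT1).1 hu1
    obtain ⟨α2, β2, γ2, hα2, hβ2, hγ2, hs2, hc2⟩ := (mem_interior_hull_triple hT4).1 hu2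
    have e1 : (α1+β1/2+γ1/2) • a + (β1/2) • b + (γ1/2) • c = u := by
      rw [← hc1, hm', hp']; module
    have e2 : (β2/2) • a + (α2/2+β2/2) • b + (α2/2+γ2) • c = u := by
      rw [← hc2, hm', hq']; module
    obtain ⟨ea, eb, ec⟩ := triple_unique h (by linarith) (by linarith) (e1.trans e2.symm)
    linarith
  · rw [Set.disjoint_left]
    intro u hu1 hu2
    obtain ⟨α1, β1, γ1, hα1, hβ1, hγ1, hs1, hc1⟩ := (mem_interior_hull_triple hT2).1 hu1
    obtain ⟨α2, β2, γ2, hα2, hβ2, hγ2, hs2, hc2⟩ := (mem_interior_hull_triple hT3).1 hu2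
    have e1 : (α1/2+β1/2) • a + (β1/2) • b + (α1/2+γ1) • c = u := by
      rw [← hc1, hm', hp']; module
    have e2 : (α2/2) • a + (α2/2+β2+γ2/2) • b + (γ2/2) • c = u := by
      rw [← hc2, hm', hq']; module
    obtain ⟨ea, eb, ec⟩ := triple_unique h (by linarith) (by linarith) (e1.trans e2.symm)
    linarith
  · rw [Set.disjoint_left]
    intro u hu1 hu2
    obtain ⟨α1, β1, γ1, hα1, hβ1, hγ1, hs1, hc1⟩ := (mem_interior_hull_triple hT2).1 hu1
    obtain ⟨α2, β2, γ2, hα2, hβ2, hγ2, hs2, hc2⟩ := (mem_interior_hull_triple hT4).1 hu2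
    have e1 : (α1/2+β1/2) • a + (β1/2) • b + (α1/2+γ1) • c = u := by
      rw [← hc1, hm', hp']; module
    have e2 : (β2/2) • a + (α2/2+β2/2) • b + (α2/2+γ2) • c = u := by
      rw [← hc2, hm', hq']; module
    obtain ⟨ea, eb, ec⟩ := triple_unique h (by linarith) (by linarith) (e1.trans e2.symm)
    linarith
  · rw [Set.disjoint_left]
    intro u hu1 hu2
    obtain ⟨α1, β1, γ1, hα1, hβ1, hγ1, hs1, hc1⟩ := (mem_interior_hull_triple hT3).1 hu1
    obtain ⟨α2, β2, γ2, hα2, hβ2, hγ2, hs2, hc2⟩ := (mem_interior_hull_triple hT4).1 hu2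
    have e1 : (α1/2) • a + (α1/2+β1+γ1/2) • b + (γ1/2) • c = u := by
      rw [← hc1, hm', hq']; module
    have e2 : (β2/2) • a + (α2/2+β2/2) • b + (α2/2+γ2) • c = u := by
      rw [← hc2, hm', hq']; module
    obtain ⟨ea, eb, ec⟩ := triple_unique h (by linarith) (by linarith) (e1.trans e2.symm)
    linarith
end

section
/- Coarsening of a compatible interior patch of valence 4 yields a conforming configuration of two triangles: let a, b, c, d be points in the Euclidean plane such that the triples (a, b, c) and (a, b, d) are affinely independent and the interiors of convexHull{a, b, c} and convexHull{a, b, d} are disjoint, and let v denote the midpoint of the segment ab. Then the union of the four triangles of the patch around v equals the union of the two coarsened triangles: convexHull{a, v, c} ∪ convexHull{v, b, c} ∪ convexHull{b, v, d} ∪ convexHull{v, a, d} = convexHull{a, b, c} ∪ convexHull{a, b, d}, the two coarsened triangles intersect exactly in the common edge, convexHull{a, b, c} ∩ convexHull{a, b, d} = convexHull{a, b}, and after elimination of v the point v lies on the common edge: v ∈ convexHull{a, b}. (Eliminating a newest vertex v whose patch consists of exactly 4 elements merges the four triangles pairwise into two father triangles without creating hanging nodes.) -/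
/-!
Let `f` be the barycentric coordinate of the triangle `abc` attached to `c`, an affine function
vanishing on the line `ab`. As `d` is off that line, `f d ≠ 0`. If `f d > 0`, the points on the
segment from the midpoint of `ab` towards `d` close to the midpoint lie in the interiors of both
triangles. Hence `f d < 0`, so `abc ⊆ {f ≥ 0}` while `abd ∩ {f ≥ 0} = [a, b]`.
The union identity is the splitting of each father triangle at the midpoint of its base.
-/

open Set AffineMap Filter Topology

section Convex

variable {E : Type*} [AddCommGroup E] [Module ℝ E]

theorem segment_eq_union_segment_midpoint (a b : E) :
    segment ℝ a b = segment ℝ a (midpoint ℝ a b) ∪ segment ℝ (midpoint ℝ a b) b := by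
  refine Subset.antisymm ?_ (union_subset
    ((convex_segment a b).segment_subset (left_mem_segment ℝ a b) (midpoint_mem_segment a b))
    ((convex_segment a b).segment_subset (midpoint_mem_segment a b) (right_mem_segment ℝ a b)))
  rintro _ ⟨s, t, hs, ht, hst, rfl⟩
  rw [midpoint_eq_smul_add, invOf_eq_inv]
  rcases le_total s t with h | h
  · right
    exact ⟨2 * s, t - s, by linarith, by linarith, by linarith, by module⟩
  · left
    exact ⟨s - t, 2 * t, by linarith, by linarith, by linarith, by module⟩

theorem convexHull_triple_eq_union_midpoint (a b c : E) :
    convexHull ℝ {a, b, c} =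
      convexHull ℝ {a, midpoint ℝ a b, c} ∪ convexHull ℝ {midpoint ℝ a b, b, c} := by
  have hull_eq (x y : E) : convexHull ℝ {x, y, c} = convexJoin ℝ {c} (segment ℝ x y) := by
    rw [pair_comm y c, insert_comm x c, convexHull_insert (insert_nonempty _ _), convexHull_pair]
  rw [hull_eq, hull_eq, hull_eq, segment_eq_union_segment_midpoint, convexJoin_union_right]

theorem convexHull_insert_inter_nonneg {s : Set E} (hs : s.Nonempty) {φ : E →ᵃ[ℝ] ℝ}
    (hφ : ∀ y ∈ s, φ y = 0) {d : E} (hd : φ d < 0) :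
    convexHull ℝ (insert d s) ∩ {x | 0 ≤ φ x} = convexHull ℝ s := by
  have hull_zero : convexHull ℝ s ⊆ φ ⁻¹' {0} :=
    convexHull_min hφ ((convex_singleton 0).affine_preimage φ)
  refine Subset.antisymm ?_ fun x hx ↦
    ⟨convexHull_mono (subset_insert d s) hx, (hull_zero hx).symm.le⟩
  rintro x ⟨hx, hφx⟩
  rw [convexHull_insert hs, convexJoin_singleton_left] at hx
  obtain ⟨y, hy, t, ⟨-, ht1⟩, rfl⟩ :
      ∃ y ∈ convexHull ℝ s, ∃ t ∈ Icc (0 : ℝ) 1, lineMap d y t = x := by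
    simpa [segment_eq_image_lineMap] using hx
  have hφy : φ y = 0 := hull_zero hy
  have ht : t = 1 := by
    simp only [mem_ofPred_eq, apply_lineMap, hφy, lineMap_apply_ring] at hφx
    nlinarith
  rwa [ht, lineMap_apply_one]

end Convex

theorem AffineBasis.eq_smul_coord_of_apply_eq_zero {ι k V P : Type*} [Field k] [AddCommGroup V]
    [Module k V] [AddTorsor V P] (B : AffineBasis ι k P) (i : ι) {φ : P →ᵃ[k] k}
    (hφ : ∀ j ≠ i, φ (B j) = 0) : φ = φ (B i) • B.coord i := by
  refine AffineMap.ext_on B.tot ?_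
  rintro _ ⟨j, rfl⟩
  by_cases hj : j = i
  · subst hj; simp
  · simp [hφ j hj, B.coord_apply_ne (Ne.symm hj)]

theorem AffineBasis.eventually_lineMap_mem_interior_convexHull {ι E : Type*} [Finite ι]
    [NormedAddCommGroup E] [NormedSpace ℝ E] (B : AffineBasis ι ℝ E) {y z : E}
    (h : ∀ i, 0 < B.coord i y ∨ B.coord i y = 0 ∧ 0 < B.coord i z) :
    ∀ᶠ t in 𝓝[>] (0 : ℝ), lineMap y z t ∈ interior (convexHull ℝ (range B)) := by
  simp only [B.interior_convexHull, mem_ofPred_eq, apply_lineMap]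
  refine eventually_all.2 fun i ↦ ?_
  rcases h i with hy | ⟨hy, hz⟩
  · have hlim :
        Tendsto (lineMap (B.coord i y) (B.coord i z)) (𝓝 (0 : ℝ)) (𝓝 (B.coord i y)) := by
      simpa using (lineMap_continuous (R := ℝ)).tendsto 0
    exact nhdsWithin_le_nhds (hlim.eventually (lt_mem_nhds hy))
  · filter_upwards [self_mem_nhdsWithin] with t (ht : 0 < t)
    simpa [hy, lineMap_apply_ring] using mul_pos ht hz

section Plane

variable {E : Type*} [NormedAddCommGroup E] [NormedSpace ℝ E] {a b c d : E}

section TriangleBasis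

variable (hE : Module.finrank ℝ E = 2)

noncomputable def triangleBasis (h : AffineIndependent ℝ ![a, b, c]) :
    AffineBasis (Fin 3) ℝ E :=
  haveI := Module.finite_of_finrank_eq_succ hE
  ⟨![a, b, c], h, h.affineSpan_eq_top_iff_card_eq_finrank_add_one.2 (by simp [hE])⟩

variable (h : AffineIndependent ℝ ![a, b, c]) (i : Fin 3)

@[simp]
theorem coe_triangleBasis : ⇑(triangleBasis hE h) = ![a, b, c] := rfl

theorem range_triangleBasis : range (triangleBasis hE h) = {a, b, c} := by
  simp_rw [coe_triangleBasis, Matrix.range_cons, Matrix.range_empty, singleton_union,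
    insert_empty_eq]

@[simp]
theorem triangleBasis_coord_first : (triangleBasis hE h).coord i a = if i = 0 then 1 else 0 :=
  (triangleBasis hE h).coord_apply i 0

@[simp]
theorem triangleBasis_coord_second : (triangleBasis hE h).coord i b = if i = 1 then 1 else 0 :=
  (triangleBasis hE h).coord_apply i 1

@[simp]
theorem triangleBasis_coord_third : (triangleBasis hE h).coord i c = if i = 2 then 1 else 0 :=
  (triangleBasis hE h).coord_apply i 2

end TriangleBasis

theorem triangleBasis_coord_neg_of_disjoint_interior (hE : Module.finrank ℝ E = 2)
    (h : AffineIndependent ℝ ![a, b, c]) (h' : AffineIndependent ℝ ![a, b, d])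
    (hdisj : Disjoint (interior (convexHull ℝ {a, b, c})) (interior (convexHull ℝ {a, b, d}))) :
    (triangleBasis hE h).coord 2 d < 0 := by
  set B := triangleBasis hE h
  set B' := triangleBasis hE h'
  have hprop : B.coord 2 = B.coord 2 d • B'.coord 2 :=
    B'.eq_smul_coord_of_apply_eq_zero 2 fun j hj ↦ by fin_cases j <;> simp_all [B, B']
  have hd : B.coord 2 d ≠ 0 := fun hd ↦ by
    simpa [hd, B] using congrArg (· c) hprop
  refine lt_of_le_of_ne (not_lt.1 fun hpos ↦ ?_) hd
  have h₁ := B.eventually_lineMap_mem_interior_convexHull (y := midpoint ℝ a b) (z := d)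
    fun i ↦ by fin_cases i <;> simp [B, hpos] <;> norm_num [midpoint_eq_smul_add]
  have h₂ := B'.eventually_lineMap_mem_interior_convexHull (y := midpoint ℝ a b) (z := d)
    fun i ↦ by fin_cases i <;> simp [B'] <;> norm_num [midpoint_eq_smul_add]
  obtain ⟨t, ht₁, ht₂⟩ := (h₁.and h₂).exists
  rw [range_triangleBasis] at ht₁ ht₂
  exact disjoint_left.1 hdisj ht₁ ht₂

theorem convexHull_inter_convexHull_eq_convexHull_pair (hE : Module.finrank ℝ E = 2)
    (h : AffineIndependent ℝ ![a, b, c]) (h' : AffineIndependent ℝ ![a, b, d])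
    (hdisj : Disjoint (interior (convexHull ℝ {a, b, c})) (interior (convexHull ℝ {a, b, d}))) :
    convexHull ℝ {a, b, c} ∩ convexHull ℝ {a, b, d} = convexHull ℝ {a, b} := by
  set f := (triangleBasis hE h).coord 2
  have hull_nonneg : convexHull ℝ {a, b, c} ⊆ {x | 0 ≤ f x} := by
    rw [← range_triangleBasis hE h, AffineBasis.convexHull_eq_nonneg_coord]
    exact fun x hx ↦ hx 2
  refine Subset.antisymm ?_ (subset_inter (convexHull_mono (by simp [insert_subset_iff]))
    (convexHull_mono (by simp [insert_subset_iff])))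
  rw [← convexHull_insert_inter_nonneg (insert_nonempty a {b}) (φ := f) (d := d) (by simp [f])
    (triangleBasis_coord_neg_of_disjoint_interior hE h h' hdisj), insert_comm d a,
    pair_comm d b]
  exact fun x hx ↦ ⟨hx.2, hull_nonneg hx.1⟩

end Plane

/-- Coarsening of a compatible interior patch of valence 4: if v is the
midpoint of ab and the four triangles (a,v,c), (v,b,c), (b,v,d), (v,a,d)
form the patch around v, then their union equals the union of the two
coarsened father triangles (a,b,c) and (a,b,d), the two father triangles
intersect exactly in their common edge, and v lies on that common edge. -/
theorem coarsen_compatible_valence4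
    (a b c d : EuclideanSpace ℝ (Fin 2))
    (h₁ : AffineIndependent ℝ ![a, b, c])
    (h₂ : AffineIndependent ℝ ![a, b, d])
    (hdisj : Disjoint (interior (convexHull ℝ {a, b, c}))
      (interior (convexHull ℝ {a, b, d}))) :
    (convexHull ℝ {a, midpoint ℝ a b, c} ∪ convexHull ℝ {midpoint ℝ a b, b, c} ∪
        convexHull ℝ {b, midpoint ℝ a b, d} ∪ convexHull ℝ {midpoint ℝ a b, a, d} =
      convexHull ℝ {a, b, c} ∪ convexHull ℝ {a, b, d}) ∧
    convexHull ℝ {a, b, c} ∩ convexHull ℝ {a, b, d} = convexHull ℝ {a, b} ∧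
    midpoint ℝ a b ∈ convexHull ℝ ({a, b} : Set (EuclideanSpace ℝ (Fin 2))) := by
  refine ⟨?_,
    convexHull_inter_convexHull_eq_convexHull_pair finrank_euclideanSpace_fin h₁ h₂ hdisj,
    by simpa only [convexHull_pair] using midpoint_mem_segment a b⟩
  rw [insert_comm b, insert_comm (midpoint ℝ a b) a, convexHull_triple_eq_union_midpoint a b c,
    convexHull_triple_eq_union_midpoint a b d]
  ac_rfl
end
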